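/- arXiv:1107.0381 — 3 statements merged into one kernel-verified Lean document; each statement's English description precedes it below -/
import Mathlib

section
/- For all real numbers α, β and positive integers n, the sum ∑_{m=1}^{n} (1/m)|cos(mα) − cos(mβ)| is strictly less than log n + γ + log 2 + 3/n. -/
/-!
Since `|x - y| ≤ 1 - x y` on `[-1, 1]` and `2 cos a cos b = cos (a - b) + cos (a + b)`, the sum is
at most `H_n - (S_n(α + β) + S_n(α - β)) / 2`, where `S_n(φ) = ∑_{m ≤ n} cos (m φ) / m`, and
`H_n < log n + γ + 1 / n`. So it suffices that `S_n(φ) ≥ -log 2 - 1 / n`. Put `z = e^{iφ}` and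
`D = |1 - z|`. If `D ≤ 1 / n`, then `Re z^m ≥ 1 - m D ≥ 0` for every `m ≤ n`. Otherwise
`S_n(φ) = -log D - Re ∫₀¹ z^{n+1} t^n / (1 - t z) dt`, and `|1 - t z| ≥ t D` bounds the integral by
`1 / (n D)`; finally `-log D - 1 / (n D) ≥ -log 2 - 1 / n` for `1 / n ≤ D ≤ 2`.
-/

open Real

theorem norm_one_sub_pow_le {R : Type*} [SeminormedRing R] [NormOneClass R] {z : R}
    (hz : ‖z‖ ≤ 1) (m : ℕ) : ‖1 - z ^ m‖ ≤ m * ‖1 - z‖ := by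
  induction m with
  | zero => simp
  | succ m ih =>
    calc ‖1 - z ^ (m + 1)‖ = ‖(1 - z ^ m) + z ^ m * (1 - z)‖ := by
          rw [pow_succ]; congr 1; noncomm_ring
      _ ≤ m * ‖1 - z‖ + 1 * ‖1 - z‖ := by
        refine norm_add_le_of_le ih ((norm_mul_le _ _).trans ?_)
        gcongr
        exact (norm_pow_le z m).trans (pow_le_one₀ (norm_nonneg z) hz)
      _ = (m + 1 : ℕ) * ‖1 - z‖ := by push_cast; ring

theorem sum_Icc_pow_mul_pow_pred_mul_one_sub {R : Type*} [CommRing R] (z w : R) (n : ℕ) :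
    (∑ m ∈ Finset.Icc 1 n, z ^ m * w ^ (m - 1)) * (1 - w * z) = z - z ^ (n + 1) * w ^ n := by
  induction n with
  | zero => simp
  | succ n ih =>
    rw [Finset.sum_Icc_succ_top (by omega), add_mul, ih, Nat.add_sub_cancel]
    ring

theorem abs_sub_le_one_sub_mul {x y : ℝ} (hx : |x| ≤ 1) (hy : |y| ≤ 1) :
    |x - y| ≤ 1 - x * y := by
  rw [abs_le] at hx hy
  rw [abs_sub_le_iff]
  constructor <;> nlinarith

theorem neg_log_two_sub_inv_le_neg_log_sub_inv {a D : ℝ} (ha : 0 < a) (hD1 : 1 / a ≤ D)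
    (hD2 : D ≤ 2) : -log 2 - 1 / a ≤ -log D - 1 / (a * D) := by
  have hD : 0 < D := (one_div_pos.2 ha).trans_le hD1
  have hlog : log (D / 2) ≤ D / 2 - 1 := log_le_sub_one_of_pos (by positivity)
  rw [log_div hD.ne' two_ne_zero] at hlog
  have haD : 1 ≤ a * D := by rwa [div_le_iff₀' ha] at hD1
  have hfrac : 1 / (a * D) - 1 / a ≤ 1 - D / 2 := by
    rw [div_sub_div _ _ (by positivity) ha.ne', div_le_iff₀ (by positivity)]
    nlinarith [mul_nonneg (sub_nonneg.2 haD) (sub_nonneg.2 hD2)]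
  linarith

theorem harmonic_lt_log_add_eulerMascheroniConstant_add_inv {n : ℕ} (hn : 0 < n) :
    (harmonic n : ℝ) < log n + eulerMascheroniConstant + 1 / n := by
  have hn' : (0 : ℝ) < n := Nat.cast_pos.2 hn
  have hseq := eulerMascheroniSeq_lt_eulerMascheroniConstant n
  rw [eulerMascheroniSeq] at hseq
  have hlog : log ((n + 1) / n) ≤ (n + 1) / n - 1 := log_le_sub_one_of_pos (by positivity)
  rw [log_div (by positivity) hn'.ne', add_div, div_self hn'.ne', add_sub_cancel_left] at hlog
  linarith

namespace Complex

theorem mul_norm_one_sub_le_norm_one_sub_mul {z : ℂ} (hz : z.re ≤ 1) {t : ℝ} (ht0 : 0 ≤ t)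
    (ht1 : t ≤ 1) : t * ‖1 - z‖ ≤ ‖1 - t * z‖ := by
  have h : ‖(t : ℂ) * (1 - z)‖ ≤ ‖1 - t * z‖ := by
    rw [← sq_le_sq₀ (norm_nonneg _) (norm_nonneg _), Complex.sq_norm, Complex.sq_norm,
      normSq_apply, normSq_apply]
    simp only [mul_re, mul_im, sub_re, sub_im, one_re, one_im, ofReal_re, ofReal_im]
    nlinarith [mul_nonneg ht0 (sub_nonneg.2 hz), mul_nonneg (sub_nonneg.2 ht1) (sub_nonneg.2 hz)]
  rwa [norm_mul, norm_real, Real.norm_of_nonneg ht0] at h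

theorem one_sub_mem_slitPlane_of_norm_le_one {z : ℂ} (hz : ‖z‖ ≤ 1) (hz1 : z ≠ 1) :
    1 - z ∈ slitPlane := by
  rw [mem_slitPlane_iff, sub_re, one_re, sub_im, one_im, zero_sub, neg_ne_zero, sub_pos]
  by_contra! h
  exact hz1 (ext (le_antisymm (re_le_norm z |>.trans hz) h.1) h.2)

theorem one_sub_ofReal_mul_mem_slitPlane {z : ℂ} (hz : 1 - z ∈ slitPlane) {t : ℝ} (ht0 : 0 ≤ t)
    (ht1 : t ≤ 1) : 1 - t * z ∈ slitPlane := by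
  rw [sub_eq_add_neg] at hz
  simpa [sub_eq_add_neg, Complex.real_smul] using
    starConvex_one_slitPlane.add_smul_mem hz ht0 ht1

theorem sum_Icc_pow_div_eq_neg_log_sub_integral {z : ℂ} (hz : 1 - z ∈ slitPlane) (n : ℕ) :
    ∑ m ∈ Finset.Icc 1 n, z ^ m / m =
      -log (1 - z) - ∫ t in (0 : ℝ)..1, z ^ (n + 1) * t ^ n / (1 - t * z) := by
  have hslit : ∀ t ∈ Set.uIcc (0 : ℝ) 1, 1 - t * z ∈ slitPlane := by
    intro t ht
    rw [Set.uIcc_of_le zero_le_one] at ht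
    exact one_sub_ofReal_mul_mem_slitPlane hz ht.1 ht.2
  have hderiv : ∀ t ∈ Set.uIcc (0 : ℝ) 1,
      HasDerivAt (fun t : ℝ => -log (1 - t * z) - ∑ m ∈ Finset.Icc 1 n, z ^ m * (t : ℂ) ^ m / m)
        (z ^ (n + 1) * t ^ n / (1 - t * z)) t := by
    intro t ht
    have hlog : HasDerivAt (fun t : ℝ => log (1 - t * z)) (-z / (1 - t * z)) t :=
      (((hasDerivAt_mul_const z).comp_ofReal).const_sub 1).clog_real (hslit t ht)
    have hpoly : HasDerivAt (fun t : ℝ => ∑ m ∈ Finset.Icc 1 n, z ^ m * (t : ℂ) ^ m / m)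
        (∑ m ∈ Finset.Icc 1 n, z ^ m * t ^ (m - 1)) t := by
      refine HasDerivAt.fun_sum fun m hm => ?_
      have hm0 : (m : ℂ) ≠ 0 := Nat.cast_ne_zero.2 (by grind)
      refine ((((hasDerivAt_pow m (t : ℂ)).comp_ofReal).const_mul (z ^ m)).div_const
        (m : ℂ)).congr_deriv ?_
      field_simp
    refine (hlog.neg.sub hpoly).congr_deriv ?_
    have hsum := sum_Icc_pow_mul_pow_pred_mul_one_sub z (t : ℂ) n
    have hne := slitPlane_ne_zero (hslit t ht)
    rw [eq_div_iff hne, sub_mul, hsum, neg_div, neg_neg, div_mul_cancel₀ z hne]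
    ring
  have hint : IntervalIntegrable (fun t : ℝ => z ^ (n + 1) * t ^ n / (1 - t * z))
      MeasureTheory.volume 0 1 :=
    (ContinuousOn.div (by fun_prop) (by fun_prop) fun t ht =>
      slitPlane_ne_zero (hslit t ht)).intervalIntegrable
  have hzero : ∑ m ∈ Finset.Icc 1 n, z ^ m * ((0 : ℝ) : ℂ) ^ m / m = 0 :=
    Finset.sum_eq_zero fun m hm => by
      rw [ofReal_zero, zero_pow (by grind), mul_zero, zero_div]
  rw [intervalIntegral.integral_eq_sub_of_hasDerivAt hderiv hint, hzero]
  simp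

theorem norm_integral_pow_div_one_sub_mul_le {z : ℂ} (hz : ‖z‖ ≤ 1) (hz1 : z ≠ 1) {n : ℕ}
    (hn : 0 < n) :
    ‖∫ t in (0 : ℝ)..1, z ^ (n + 1) * t ^ n / (1 - t * z)‖ ≤ 1 / (n * ‖1 - z‖) := by
  have hpt : ∀ t ∈ Set.Ioc (0 : ℝ) 1,
      ‖z ^ (n + 1) * t ^ n / (1 - t * z)‖ ≤ t ^ (n - 1) / ‖1 - z‖ := by
    rintro t ⟨ht0, ht1⟩
    have hD : 0 < ‖1 - z‖ := norm_pos_iff.2 (sub_ne_zero.2 hz1.symm)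
    have hle := mul_norm_one_sub_le_norm_one_sub_mul ((re_le_norm z).trans hz) ht0.le ht1
    rw [norm_div, norm_mul, norm_pow, norm_pow, norm_real, Real.norm_of_nonneg ht0.le]
    calc ‖z‖ ^ (n + 1) * t ^ n / ‖1 - t * z‖ ≤ 1 * t ^ n / (t * ‖1 - z‖) := by
          gcongr
          exact pow_le_one₀ (norm_nonneg z) hz
      _ = t ^ (n - 1) / ‖1 - z‖ := by
          rw [one_mul, mul_comm t, ← pow_sub_one_mul hn.ne' t, mul_div_mul_right _ _ ht0.ne']
  calc ‖∫ t in (0 : ℝ)..1, z ^ (n + 1) * t ^ n / (1 - t * z)‖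
      ≤ ∫ t in (0 : ℝ)..1, t ^ (n - 1) / ‖1 - z‖ :=
        intervalIntegral.norm_integral_le_of_norm_le zero_le_one (.of_forall hpt)
          (Continuous.intervalIntegrable (by fun_prop) _ _)
    _ = 1 / (n * ‖1 - z‖) := by
        rw [intervalIntegral.integral_div, integral_pow, Nat.sub_add_cancel hn,
          Nat.cast_pred hn, zero_pow hn.ne',
          one_pow, sub_zero, sub_add_cancel, div_div]

theorem one_sub_mul_norm_one_sub_le_re_pow {z : ℂ} (hz : ‖z‖ ≤ 1) (m : ℕ) :
    1 - m * ‖1 - z‖ ≤ (z ^ m).re := by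
  have h := (re_le_norm (1 - z ^ m)).trans (norm_one_sub_pow_le hz m)
  rw [Complex.sub_re, Complex.one_re] at h
  linarith

theorem neg_log_two_sub_inv_le_re_sum_pow_div {z : ℂ} (hz : ‖z‖ ≤ 1) {n : ℕ} (hn : 0 < n) :
    -Real.log 2 - 1 / n ≤ (∑ m ∈ Finset.Icc 1 n, z ^ m / m).re := by
  have hn' : (0 : ℝ) < n := Nat.cast_pos.2 hn
  rcases le_or_gt ‖1 - z‖ (1 / n) with hsmall | hlarge
  · have hnonneg : 0 ≤ (∑ m ∈ Finset.Icc 1 n, z ^ m / m).re := by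
      rw [re_sum]
      refine Finset.sum_nonneg fun m hm => ?_
      rw [div_natCast_re]
      refine div_nonneg (le_trans ?_ (one_sub_mul_norm_one_sub_le_re_pow hz m)) m.cast_nonneg
      have hm : (m : ℝ) ≤ n := Nat.cast_le.2 (Finset.mem_Icc.1 hm).2
      rw [sub_nonneg]
      calc (m : ℝ) * ‖1 - z‖ ≤ n * (1 / n) := by gcongr
        _ = 1 := mul_one_div_cancel hn'.ne'
    linarith [Real.log_pos one_lt_two, one_div_pos.2 hn']
  · have hz1 : z ≠ 1 := by
      rintro rfl
      simp only [sub_self, norm_zero] at hlarge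
      linarith [one_div_pos.2 hn']
    have hD2 : ‖1 - z‖ ≤ 2 := (norm_sub_le _ _).trans (by rw [norm_one]; linarith)
    rw [sum_Icc_pow_div_eq_neg_log_sub_integral (one_sub_mem_slitPlane_of_norm_le_one hz hz1),
      sub_re, neg_re, log_re]
    have herr := (re_le_norm _).trans (norm_integral_pow_div_one_sub_mul_le hz hz1 hn)
    linarith [neg_log_two_sub_inv_le_neg_log_sub_inv hn' hlarge.le hD2]

end Complex

theorem neg_log_two_sub_inv_le_sum_cos_div (φ : ℝ) {n : ℕ} (hn : 0 < n) :
    -log 2 - 1 / n ≤ ∑ m ∈ Finset.Icc 1 n, cos (m * φ) / m := by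
  convert Complex.neg_log_two_sub_inv_le_re_sum_pow_div
    (Complex.norm_exp_ofReal_mul_I φ).le hn using 1
  rw [Complex.re_sum]
  refine Finset.sum_congr rfl fun m _ => ?_
  rw [Complex.div_natCast_re, ← Complex.exp_nat_mul, ← mul_assoc, ← Complex.ofReal_natCast,
    ← Complex.ofReal_mul, Complex.exp_ofReal_mul_I_re]

theorem polya_vinogradov_cos_lemma (α β : ℝ) (n : ℕ) (hn : 0 < n) :
    ∑ m ∈ Finset.Icc 1 n, (1 / (m : ℝ)) * |Real.cos (m * α) - Real.cos (m * β)| <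
      Real.log n + Real.eulerMascheroniConstant + Real.log 2 + 3 / n := by
  have hterm : ∀ m ∈ Finset.Icc 1 n, (1 / (m : ℝ)) * |cos (m * α) - cos (m * β)| ≤
      1 / m - (cos (m * (α + β)) / m) / 2 - (cos (m * (α - β)) / m) / 2 := by
    intro m _
    have habs := abs_sub_le_one_sub_mul (abs_cos_le_one (m * α)) (abs_cos_le_one (m * β))
    have hprod := two_mul_cos_mul_cos (m * α) (m * β)
    rw [← mul_sub, ← mul_add] at hprod
    calc _ ≤ 1 / (m : ℝ) * (1 - cos (m * α) * cos (m * β)) := by gcongr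
      _ = _ := by linear_combination (-1 / (2 * m) : ℝ) * hprod
  have hharm : ∑ m ∈ Finset.Icc 1 n, 1 / (m : ℝ) = harmonic n := by
    simp [harmonic_eq_sum_Icc]
  calc _ ≤ ∑ m ∈ Finset.Icc 1 n,
          (1 / (m : ℝ) - (cos (m * (α + β)) / m) / 2 - (cos (m * (α - β)) / m) / 2) :=
        Finset.sum_le_sum hterm
    _ = harmonic n - (∑ m ∈ Finset.Icc 1 n, cos (m * (α + β)) / m) / 2
          - (∑ m ∈ Finset.Icc 1 n, cos (m * (α - β)) / m) / 2 := by
        rw [Finset.sum_sub_distrib, Finset.sum_sub_distrib, hharm, Finset.sum_div, Finset.sum_div]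
    _ ≤ harmonic n + log 2 + 1 / n := by
        linarith [neg_log_two_sub_inv_le_sum_cos_div (α + β) hn,
          neg_log_two_sub_inv_le_sum_cos_div (α - β) hn]
    _ < log n + eulerMascheroniConstant + log 2 + 3 / n := by
        have h3 : (3 : ℝ) / n = 3 * (1 / n) := by ring
        linarith [harmonic_lt_log_add_eulerMascheroniConstant_add_inv hn,
          one_div_pos.2 (Nat.cast_pos.2 hn : (0 : ℝ) < n)]
end

section
/- For any real number u with ‖u‖ > 0 and any real B > 0, the absolute value of the tail sum ∑_{m > B/‖u‖} sin(2π m u)/m is at most 1/(2B). -/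
open Real Filter

/-- Distance from a real number to the nearest integer. -/
noncomputable def distNearestInt (u : ℝ) : ℝ := |u - round u|

/-!
The tail starts at `M = ⌊B / ‖u‖⌋₊ + 1 > B / ‖u‖`. Any block sum of `sin (2π m u)` over
consecutive `m` is at most `1 / |sin (π u)| ≤ 1 / (2 ‖u‖)` in absolute value (closed form of a
sine sum, then Jordan's inequality), so Abel summation against the decreasing weights `1 / m`
bounds every partial sum of the tail, hence its limit, by `1 / (2 ‖u‖ M) < 1 / (2 B)`.
-/

open Finset

theorem norm_sum_range_smul_le_of_antitone {E : Type*} [SeminormedAddCommGroup E]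
    [NormedSpace ℝ E] {b : ℕ → ℝ} {a : ℕ → E} {K : ℝ} (hb : Antitone b) (hb0 : ∀ i, 0 ≤ b i)
    (ha : ∀ n, ‖∑ i ∈ range n, a i‖ ≤ K) (n : ℕ) :
    ‖∑ i ∈ range n, b i • a i‖ ≤ K * b 0 := by
  rcases n with _ | n
  · simpa using mul_nonneg ((norm_nonneg _).trans (ha 0)) (hb0 0)
  rw [sum_range_by_parts, Nat.add_sub_cancel]
  calc ‖b n • ∑ i ∈ range (n + 1), a i
          - ∑ i ∈ range n, (b (i + 1) - b i) • ∑ j ∈ range (i + 1), a j‖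
      ≤ b n * K + ∑ i ∈ range n, (b i - b (i + 1)) * K := by
        refine (norm_sub_le _ _).trans
          (add_le_add ?_ ((norm_sum_le _ _).trans (sum_le_sum fun i _ => ?_)))
        · rw [norm_smul, Real.norm_of_nonneg (hb0 n)]
          exact mul_le_mul_of_nonneg_left (ha _) (hb0 n)
        · rw [norm_smul, Real.norm_of_nonpos (sub_nonpos.2 (hb i.le_succ)), neg_sub]
          exact mul_le_mul_of_nonneg_left (ha _) (sub_nonneg.2 (hb i.le_succ))
    _ = K * b 0 := by rw [← sum_mul, sum_range_sub']; ring

theorem exists_tendsto_sum_range_smul_of_antitone {E : Type*} [NormedAddCommGroup E]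
    [NormedSpace ℝ E] [CompleteSpace E] {b : ℕ → ℝ} {a : ℕ → E} {K : ℝ} (hb : Antitone b)
    (hb_lim : Tendsto b atTop (nhds 0)) (ha : ∀ n, ‖∑ i ∈ range n, a i‖ ≤ K) :
    ∃ L, Tendsto (fun n => ∑ i ∈ range n, b i • a i) atTop (nhds L) ∧ ‖L‖ ≤ K * b 0 := by
  obtain ⟨L, hL⟩ := cauchySeq_tendsto_of_complete
    (hb.cauchySeq_series_mul_of_tendsto_zero_of_bounded hb_lim ha)
  exact ⟨L, hL, le_of_tendsto hL.norm (Eventually.of_forall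
    (norm_sum_range_smul_le_of_antitone hb (fun i => hb.le_of_tendsto hb_lim i) ha))⟩

theorem two_mul_distNearestInt_le_abs_sin (u : ℝ) : 2 * distNearestInt u ≤ |sin (π * u)| := by
  set r := u - round u
  have hr : distNearestInt u = |r| := rfl
  have hsin : |sin (π * u)| = |sin (π * r)| := by
    rw [show π * r = π * u - round u * π by ring, sin_sub_int_mul_pi, abs_mul,
      abs_neg_one_zpow, one_mul]
  have hπr : |π * r| ≤ π / 2 := by
    rw [abs_mul, abs_of_pos pi_pos]
    nlinarith [pi_pos, abs_sub_round u]
  rw [hsin, abs_sin_eq_sin_abs_of_abs_le_pi (hπr.trans (by linarith [pi_pos]))]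
  calc 2 * distNearestInt u = 2 / π * |π * r| := by
        rw [abs_mul, abs_of_pos pi_pos, hr]; field_simp
    _ ≤ sin |π * r| := mul_le_sin (abs_nonneg _) hπr

theorem abs_sum_range_sin_two_pi_mul_le {u : ℝ} (hu : 0 < distNearestInt u) (M n : ℕ) :
    |∑ i ∈ range n, sin (2 * π * ↑(M + i) * u)| ≤ 1 / (2 * distNearestInt u) := by
  set S := ∑ i ∈ range n, sin (2 * π * ↑(M + i) * u)
  have hclosed : sin (π * u) * S =
      sin (n * (2 * π * u) / 2) * sin ((n - 1) * (2 * π * u) / 2 + 2 * π * M * u) := by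
    rw [← sin_mul_sum_sin, show 2 * π * u / 2 = π * u by ring]
    congr 1
    refine sum_congr rfl fun i _ => congrArg sin ?_
    push_cast
    ring
  have hS : |sin (π * u)| * |S| ≤ 1 := by
    rw [← abs_mul, hclosed, abs_mul]
    exact mul_le_one₀ (abs_sin_le_one _) (abs_nonneg _) (abs_sin_le_one _)
  rw [le_div_iff₀ (by positivity)]
  nlinarith [two_mul_distNearestInt_le_abs_sin u, abs_nonneg S]

theorem sum_Icc_one_ite_lt_eq_sum_range {M : Type*} [AddCommMonoid M] (t : ℝ) (g : ℕ → M)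
    (N : ℕ) :
    ∑ m ∈ Icc 1 N, (if t < m then g m else 0) = ∑ i ∈ range (N - ⌊t⌋₊), g (⌊t⌋₊ + 1 + i) := by
  have hfilter : (Icc 1 N).filter (fun m : ℕ => t < m) = Ico (⌊t⌋₊ + 1) (N + 1) := by
    ext m
    simp only [mem_filter, mem_Icc, mem_Ico]
    constructor
    · rintro ⟨⟨hm1, hmN⟩, htm⟩
      exact ⟨(Nat.floor_lt' (by omega)).2 htm, by omega⟩
    · rintro ⟨htm, hmN⟩
      exact ⟨⟨by omega, by omega⟩, (Nat.floor_lt' (by omega)).1 htm⟩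
  rw [← sum_filter, hfilter, sum_Ico_eq_sum_range, Nat.add_sub_add_right]

theorem sin_tail_sum_bound (u : ℝ) (hu : 0 < distNearestInt u) (B : ℝ) (hB : 0 < B) :
    ∃ L : ℝ,
      Tendsto (fun N : ℕ =>
          ∑ m ∈ Finset.Icc 1 N, if B / distNearestInt u < (m : ℝ) then
            Real.sin (2 * π * m * u) / m else 0) atTop (nhds L) ∧
      |L| ≤ 1 / (2 * B) := by
  set c := distNearestInt u
  set M := ⌊B / c⌋₊ + 1
  have hBM : B < c * M := by
    have := Nat.lt_floor_add_one (B / c)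
    rw [div_lt_iff₀ hu] at this
    push_cast [M]
    linarith
  have hweights : Antitone fun i : ℕ => ((M + i : ℕ) : ℝ)⁻¹ := fun i j hij =>
    inv_anti₀ (by positivity) (by exact_mod_cast Nat.add_le_add_left hij M)
  have hweights_lim : Tendsto (fun i : ℕ => ((M + i : ℕ) : ℝ)⁻¹) atTop (nhds 0) :=
    tendsto_inv_atTop_nhds_zero_nat.comp (tendsto_atTop_mono (Nat.le_add_left · M) tendsto_id)
  obtain ⟨L, hL, hLK⟩ := exists_tendsto_sum_range_smul_of_antitone hweights hweights_lim
    fun n => (norm_eq_abs _).trans_le (abs_sum_range_sin_two_pi_mul_le hu M n)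
  refine ⟨L, (hL.comp (tendsto_sub_atTop_nat ⌊B / c⌋₊)).congr fun N => ?_, ?_⟩
  · simp only [Function.comp, sum_Icc_one_ite_lt_eq_sum_range, smul_eq_mul, div_eq_inv_mul, M]
  · calc |L| ≤ 1 / (2 * c) * (M : ℝ)⁻¹ := by simpa using hLK
      _ = 1 / (2 * (c * M)) := by ring
      _ ≤ 1 / (2 * B) := one_div_le_one_div_of_le (by positivity) (by linarith)
end

section
/- If χ is a nonprincipal Dirichlet character mod q with χ(−1) = 1, then max over 0 ≤ M < N ≤ q of |∑_{n=M}^{N} χ(n)| equals 2 · max over 0 ≤ N ≤ q of |∑_{a=0}^{N} χ(a)|. -/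
/-!
Write `P k = ∑_{n < k} χ(n)`, so that a sum over `[M, N]` is `P (N + 1) - P M` and is at most
`2 T` in norm. Since `χ` is even and sums to zero over a period, the reflection `n ↦ q - n`
gives `P (q + 1 - j) = -P j`. If `j` is where `‖P j‖` attains `T`, then `P j - P (q + 1 - j)` has
norm `2 T`; as `T ≥ ‖χ(0) + χ(1)‖ = 1` and each term has norm at most one, the indices `j` and
`q + 1 - j` are at least two apart, so this difference is a sum over an interval `[M, N]` with
`M < N`.
-/

open Finset

theorem sum_Icc_eq_sum_range_sub_sum_range {E : Type*} [AddCommGroup E] (f : ℕ → E) {M N : ℕ}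
    (h : M ≤ N + 1) :
    ∑ n ∈ Icc M N, f n = ∑ n ∈ range (N + 1), f n - ∑ n ∈ range M, f n := by
  rw [← Ico_add_one_right_eq_Icc, sum_Ico_eq_sub f h]

theorem sum_range_add_sum_range_sub_of_symm {E : Type*} [AddCommMonoid E] {f : ℕ → E} {m j : ℕ}
    (hf : ∀ n ≤ m, f (m - n) = f n) (hj : j ≤ m + 1) :
    ∑ n ∈ range j, f n + ∑ n ∈ range (m + 1 - j), f n = ∑ n ∈ range (m + 1), f n := by
  rw [← sum_range_add_sum_Ico f hj]
  congr 1
  have hreflect := sum_Ico_reflect f j (le_refl (m + 1))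
  rw [Nat.sub_self, Nat.Ico_zero_eq_range] at hreflect
  rw [← hreflect]
  exact sum_congr rfl fun n hn => hf n (by rw [mem_Ico] at hn; omega)

section NormBounds

variable {E : Type*} [SeminormedAddCommGroup E] {f : ℕ → E}

theorem norm_sum_range_sub_sum_range_le (hf : ∀ n, ‖f n‖ ≤ 1) {i j : ℕ} (hij : i ≤ j) :
    ‖∑ n ∈ range j, f n - ∑ n ∈ range i, f n‖ ≤ (j - i : ℝ) := by
  rw [← sum_Ico_eq_sub f hij]
  calc ‖∑ n ∈ Ico i j, f n‖ ≤ ∑ _n ∈ Ico i j, (1 : ℝ) := norm_sum_le_of_le _ fun n _ => hf n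
    _ = j - i := by simp [Nat.cast_sub hij]

theorem norm_sum_Icc_le_two_mul {q M N : ℕ} {T : ℝ}
    (hT : ∀ k ≤ q, ‖∑ n ∈ range (k + 1), f n‖ ≤ T) (hT₀ : 0 ≤ T) (hMN : M ≤ N + 1)
    (hN : N ≤ q) : ‖∑ n ∈ Icc M N, f n‖ ≤ 2 * T := by
  have hM : ‖∑ n ∈ range M, f n‖ ≤ T := by
    rcases M with _ | k
    · simpa using hT₀
    · exact hT k (by omega)
  rw [sum_Icc_eq_sum_range_sub_sum_range f hMN]
  linarith [norm_sub_le (∑ n ∈ range (N + 1), f n) (∑ n ∈ range M, f n), hT N hN]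

theorem exists_sum_Icc_eq_sum_range_sub_of_one_lt_norm (hf : ∀ n, ‖f n‖ ≤ 1) {q i j : ℕ}
    (hij : i ≤ j) (hj : j ≤ q + 1) (h : 1 < ‖∑ n ∈ range j, f n - ∑ n ∈ range i, f n‖) :
    ∃ M N, M < N ∧ N ≤ q ∧
      ∑ n ∈ Icc M N, f n = ∑ n ∈ range j, f n - ∑ n ∈ range i, f n := by
  have hgap : (i : ℝ) + 1 < j := by linarith [norm_sum_range_sub_sum_range_le hf hij]
  have hgap' : i + 1 < j := by exact_mod_cast hgap
  refine ⟨i, j - 1, by omega, by omega, ?_⟩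
  rw [sum_Icc_eq_sum_range_sub_sum_range f (by omega), Nat.sub_add_cancel (by omega)]

end NormBounds

section RealNormedSpace

variable {E : Type*} [SeminormedAddCommGroup E] [NormedSpace ℝ E] {f : ℕ → E} {q : ℕ}

theorem exists_norm_sum_Icc_eq_two_mul (hf : ∀ n, ‖f n‖ ≤ 1) (hsymm : ∀ n ≤ q, f (q - n) = f n)
    (hsum : ∑ n ∈ range (q + 1), f n = 0) {j : ℕ} (hj : j ≤ q + 1)
    (hone : 1 ≤ ‖∑ n ∈ range j, f n‖) :
    ∃ M N, M < N ∧ N ≤ q ∧ ‖∑ n ∈ Icc M N, f n‖ = 2 * ‖∑ n ∈ range j, f n‖ := by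
  set P : ℕ → E := fun k => ∑ n ∈ range k, f n
  have hreflect : P (q + 1 - j) = -P j :=
    eq_neg_of_add_eq_zero_right ((sum_range_add_sum_range_sub_of_symm hsymm hj).trans hsum)
  have hdiff : ‖P j - P (q + 1 - j)‖ = 2 * ‖P j‖ := by
    rw [hreflect, sub_neg_eq_add, ← two_smul ℝ, norm_smul, Real.norm_two]
  obtain hle | hle := le_total (q + 1 - j) j
  · obtain ⟨M, N, hMN, hN, hIcc⟩ :=
      exists_sum_Icc_eq_sum_range_sub_of_one_lt_norm hf hle hj (by linarith)
    exact ⟨M, N, hMN, hN, by rw [hIcc, hdiff]⟩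
  · rw [norm_sub_rev] at hdiff
    obtain ⟨M, N, hMN, hN, hIcc⟩ :=
      exists_sum_Icc_eq_sum_range_sub_of_one_lt_norm hf hle (Nat.sub_le _ _) (by linarith)
    exact ⟨M, N, hMN, hN, by rw [hIcc, hdiff]⟩

theorem sSup_norm_sum_Icc_eq_two_mul_sSup_norm_sum_Icc_zero (hq : 1 ≤ q)
    (hf : ∀ n, ‖f n‖ ≤ 1) (h₀ : f 0 = 0) (h₁ : ‖f 1‖ = 1) (hsymm : ∀ n ≤ q, f (q - n) = f n)
    (hsum : ∑ n ∈ range (q + 1), f n = 0) :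
    sSup {x : ℝ | ∃ M N : ℕ, M < N ∧ N ≤ q ∧ x = ‖∑ n ∈ Icc M N, f n‖} =
      2 * sSup {x : ℝ | ∃ N : ℕ, N ≤ q ∧ x = ‖∑ a ∈ Icc 0 N, f a‖} := by
  simp only [← Nat.range_succ_eq_Icc_zero]
  obtain ⟨N₀, hN₀, hmax⟩ := exists_max_image (range (q + 1))
    (fun N => ‖∑ n ∈ range (N + 1), f n‖) nonempty_range_add_one
  simp only [mem_range, Nat.lt_succ_iff] at hN₀ hmax
  set T := ‖∑ n ∈ range (N₀ + 1), f n‖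
  have hT : 1 ≤ T := by simpa [sum_range_succ, h₀, h₁] using hmax 1 hq
  have hB : IsGreatest {x : ℝ | ∃ N ≤ q, x = ‖∑ n ∈ range (N + 1), f n‖} T :=
    ⟨⟨N₀, hN₀, rfl⟩, by rintro x ⟨N, hN, rfl⟩; exact hmax N hN⟩
  have hA : IsGreatest {x : ℝ | ∃ M N, M < N ∧ N ≤ q ∧ x = ‖∑ n ∈ Icc M N, f n‖} (2 * T) := by
    refine ⟨?_, ?_⟩
    · obtain ⟨M, N, hMN, hN, h⟩ := exists_norm_sum_Icc_eq_two_mul hf hsymm hsum (by omega) hT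
      exact ⟨M, N, hMN, hN, h.symm⟩
    · rintro x ⟨M, N, hMN, hN, rfl⟩
      exact norm_sum_Icc_le_two_mul hmax (by linarith) (by omega) hN
  rw [hA.csSup_eq, hB.csSup_eq]

end RealNormedSpace

namespace DirichletCharacter

variable {R : Type*} [CommRing R] {q : ℕ}

theorem sum_range_eq_zero [IsDomain R] [NeZero q] {χ : DirichletCharacter R q} (hχ : χ ≠ 1) :
    ∑ n ∈ range q, χ n = 0 := by
  obtain ⟨q, rfl⟩ := Nat.exists_eq_add_one_of_ne_zero (NeZero.ne q)
  rw [← MulChar.sum_eq_zero_of_ne_one hχ, sum_range]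
  exact Fintype.sum_congr _ _ fun i => congrArg χ (Fin.cast_val_eq_self i)

theorem Even.apply_natCast_sub {χ : DirichletCharacter R q} (hχ : χ.Even) {n : ℕ} (hn : n ≤ q) :
    χ ↑(q - n) = χ n := by
  rw [Nat.cast_sub hn, ZMod.natCast_self, zero_sub, hχ.eval_neg]

end DirichletCharacter

theorem even_char_S_eq_two_T (q : ℕ) (hq : 0 < q) (χ : DirichletCharacter ℂ q)
    (hχ : χ ≠ 1) (heven : χ (-1) = 1) :
    sSup {x : ℝ | ∃ M N : ℕ, M < N ∧ N ≤ q ∧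
        x = ‖∑ n ∈ Finset.Icc M N, χ n‖} =
      2 * sSup {x : ℝ | ∃ N : ℕ, N ≤ q ∧
        x = ‖∑ a ∈ Finset.Icc 0 N, χ a‖} := by
  have : Fact (1 < q) := ⟨by
    by_contra h
    exact hχ (DirichletCharacter.level_one' χ (by omega))⟩
  have hsum : ∑ n ∈ range (q + 1), χ n = 0 := by
    rw [sum_range_succ, DirichletCharacter.sum_range_eq_zero hχ, ZMod.natCast_self,
      MulChar.map_zero, zero_add]
  exact sSup_norm_sum_Icc_eq_two_mul_sSup_norm_sum_Icc_zero hq (fun n => χ.norm_le_one n)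
    (by simp [MulChar.map_zero]) (by simp) (fun n hn => DirichletCharacter.Even.apply_natCast_sub heven hn) hsum
end
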